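/- Let P = Σ_{i=1}^m A_i X^i be a polynomial over FDDS without constant term, and let M be the monomial (A_1 ⊕ A_2 ⊕ ⋯ ⊕ A_m) X whose coefficient is the sum of all the coefficients of P. Then P is injective up to isomorphism (for all FDDS X, Y, P(X) ≅ P(Y) implies X ≅ Y) if and only if M is injective up to isomorphism. -/

import Mathlib

/-- Isomorphism of finite dynamical systems: a bijection commuting with the maps. -/
def FddsIso {α β : Type} (f : α → α) (g : β → β) : Prop :=
  ∃ e : α ≃ β, ⇑e ∘ f = g ∘ ⇑e

/-- A state is periodic if some positive iterate fixes it. -/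
def IsPeriodicState {α : Type} (f : α → α) (x : α) : Prop :=
  ∃ n > 0, f^[n] x = x

/-- The vertex set of the unroll of `(α, f)`. -/
def UnrollSet {α : Type} (f : α → α) : Set (α × ℕ) :=
  {p | IsPeriodicState f (f^[p.2] p.1)}

/-- The parent map of the unroll. -/
def unrollMap {α : Type} (f : α → α) (q : UnrollSet f) : UnrollSet f :=
  if h : q.1.2 = 0 then q
  else ⟨(f q.1.1, q.1.2 - 1), by
    obtain ⟨⟨x, k⟩, hq⟩ := q
    simp only at h
    obtain ⟨k', rfl⟩ := Nat.exists_eq_succ_of_ne_zero h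
    simpa [UnrollSet, Function.iterate_succ_apply] using hq⟩

/-- Isomorphism of unrolls. -/
def UnrollIso {α β : Type} (f : α → α) (g : β → β) : Prop :=
  ∃ φ : UnrollSet f ≃ UnrollSet g, ⇑φ ∘ unrollMap f = unrollMap g ∘ ⇑φ

/-- Vertices of the cut at depth `n` of the unroll. -/
def CutSet {α : Type} (f : α → α) (n : ℕ) : Set (α × ℕ) :=
  {p | p ∈ UnrollSet f ∧ p.2 ≤ n}

/-- The parent map of the cut at depth `n`. -/
def cutMap {α : Type} (f : α → α) (n : ℕ) (q : CutSet f n) : CutSet f n :=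
  if h : q.1.2 = 0 then q
  else ⟨(f q.1.1, q.1.2 - 1), by
    obtain ⟨⟨x, k⟩, hq⟩ := q
    obtain ⟨hq1, hq2⟩ := hq
    simp only at h hq2 ⊢
    obtain ⟨k', rfl⟩ := Nat.exists_eq_succ_of_ne_zero h
    refine ⟨by simpa [UnrollSet, Function.iterate_succ_apply] using hq1, by omega⟩⟩

/-- Isomorphism of cuts at depth `n`. -/
def CutIso {α β : Type} (f : α → α) (g : β → β) (n : ℕ) : Prop :=
  ∃ φ : CutSet f n ≃ CutSet g n, ⇑φ ∘ cutMap f n = cutMap g n ∘ ⇑φ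

/-- The states of the components whose cycle length divides `p`. -/
def DivSet {α : Type} (f : α → α) (p : ℕ) : Set α :=
  {x | ∃ N, f^[N + p] x = f^[N] x}

/-- The restriction of `f` to `DivSet f p`. -/
def divMap {α : Type} (f : α → α) (p : ℕ) (q : DivSet f p) : DivSet f p :=
  ⟨f q.1, by
    obtain ⟨x, N, hN⟩ := q
    exact ⟨N, by
      rw [← Function.iterate_succ_apply, ← Function.iterate_succ_apply,
        Function.iterate_succ_apply', Function.iterate_succ_apply', hN]⟩⟩

/-- `k`-th power of an FDDS: map on `Fin k → α`. -/
def powMap {α : Type} (f : α → α) (k : ℕ) (v : Fin k → α) : Fin k → α := f ∘ v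

/-- Evaluation of the polynomial `Σ_{i=0}^m A_i X^i` at `(α, f)`. -/
def polyEval {m : ℕ} {γ : Fin (m + 1) → Type} (g : ∀ i, γ i → γ i)
    {α : Type} (f : α → α)
    (x : Σ i : Fin (m + 1), γ i × (Fin i.val → α)) :
    Σ i : Fin (m + 1), γ i × (Fin i.val → α) :=
  ⟨x.1, g x.1 x.2.1, f ∘ x.2.2⟩

/-- Evaluation of the constant-free polynomial `Σ_{i=1}^m A_i X^i` at `(α, f)`. -/
def polyEvalNC {m : ℕ} {γ : Fin m → Type} (g : ∀ i, γ i → γ i)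
    {α : Type} (f : α → α)
    (x : Σ i : Fin m, γ i × (Fin (i.val + 1) → α)) :
    Σ i : Fin m, γ i × (Fin (i.val + 1) → α) :=
  ⟨x.1, g x.1 x.2.1, f ∘ x.2.2⟩

/-- An FDDS is cancelable if it can be canceled from products. -/
def Cancelable {α : Type} (f : α → α) : Prop :=
  ∀ (β γ : Type) [Fintype β] [Fintype γ] (g : β → β) (h : γ → γ),
    FddsIso (Prod.map f g) (Prod.map f h) → FddsIso g h

/-- The sum `A_1 ⊕ ⋯ ⊕ A_m` of the coefficients of a constant-free polynomial. -/
def sumCoeffMap {m : ℕ} {γ : Fin m → Type} (g : ∀ i, γ i → γ i)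
    (q : Σ i : Fin m, γ i) : Σ i : Fin m, γ i :=
  ⟨q.1, g q.1 q.2⟩


/-!
Fix a finite connected system `Z` and write `a i = |Hom(Z, A_i)|`, `x = |Hom(Z, X)|`. Homomorphisms
out of a connected system land in a single summand, so `|Hom(Z, P(X))| = ∑ a i * x ^ (i + 1)` and
`|Hom(Z, M(X))| = (∑ a i) * x`. Both are strictly increasing in `x` unless every `a i` vanishes, so
`P(X)` and `P(Y)` receive equally many homomorphisms from every connected `Z` iff `M(X)` and
`M(Y)` do.

Such counts determine a finite system up to isomorphism (Lovász): counts from an arbitrary `Z` are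
products over its components; a homomorphism from `Z` is an embedding of a quotient of `Z`, so by
induction on `|Z|` the numbers of embeddings agree as well, and embeddings `X ↪ Y` and `Y ↪ X` give
an isomorphism. Hence `P(X) ≅ P(Y)` iff `M(X) ≅ M(Y)`.
-/

open Function

section Homomorphisms

variable {ζ ζ' α α' β : Type} {z : ζ → ζ} {z' : ζ' → ζ'} {f : α → α} {f' : α' → α'} {g : β → β}

abbrev FddsHom (z : ζ → ζ) (f : α → α) : Type := {h : ζ → α // Semiconj h z f}

abbrev FddsEmb (z : ζ → ζ) (f : α → α) : Type := {h : ζ → α // Semiconj h z f ∧ Injective h}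

theorem fddsIso_iff_exists_semiconj : FddsIso f g ↔ ∃ e : α ≃ β, Semiconj e f g := by
  simp only [FddsIso, semiconj_iff_comp_eq]

theorem FddsIso.refl (f : α → α) : FddsIso f f := ⟨Equiv.refl α, rfl⟩

theorem FddsIso.symm (h : FddsIso f g) : FddsIso g f := by
  obtain ⟨e, he⟩ := fddsIso_iff_exists_semiconj.1 h
  exact fddsIso_iff_exists_semiconj.2 ⟨e.symm, he.inverse_left e.left_inv e.right_inv⟩

theorem semiconj_arrowCongr_iff {ez : ζ ≃ ζ'} {ef : α ≃ α'} (hz : Semiconj ez z z')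
    (hf : Semiconj ef f f') {h : ζ → α} :
    Semiconj (ez.arrowCongr ef h) z' f' ↔ Semiconj h z f := by
  have hz' : Semiconj ez.symm z' z := hz.inverse_left ez.left_inv ez.right_inv
  have hf' (a : α) : f' (ef a) = ef (f a) := (hf a).symm
  simp only [Semiconj, Equiv.arrowCongr_apply, comp_apply, hz' _, hf', ef.apply_eq_iff_eq]
  exact ez.symm.forall_congr_right (q := fun t => h (z t) = f (h t))

theorem FddsIso.card_fddsHom_eq (hz : FddsIso z z') (hf : FddsIso f f') :
    Nat.card (FddsHom z f) = Nat.card (FddsHom z' f') := by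
  obtain ⟨ez, hz⟩ := fddsIso_iff_exists_semiconj.1 hz
  obtain ⟨ef, hf⟩ := fddsIso_iff_exists_semiconj.1 hf
  exact Nat.card_congr <| (ez.arrowCongr ef).subtypeEquiv fun h =>
    (semiconj_arrowCongr_iff hz hf).symm

theorem FddsIso.card_fddsEmb_eq (hz : FddsIso z z') (hf : FddsIso f f') :
    Nat.card (FddsEmb z f) = Nat.card (FddsEmb z' f') := by
  obtain ⟨ez, hz⟩ := fddsIso_iff_exists_semiconj.1 hz
  obtain ⟨ef, hf⟩ := fddsIso_iff_exists_semiconj.1 hf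
  refine Nat.card_congr <| (ez.arrowCongr ef).subtypeEquiv fun h =>
    and_congr (semiconj_arrowCongr_iff hz hf).symm ?_
  exact ((EquivLike.comp_injective _ ef).trans (EquivLike.injective_comp ez.symm h)).symm

theorem fddsIso_of_fddsEmb [Finite α] [Finite β] (u : FddsEmb f g) (v : FddsEmb g f) :
    FddsIso f g := by
  have hcard : Nat.card β ≤ Nat.card α := Nat.card_le_card_of_injective v.1 v.2.2
  exact fddsIso_iff_exists_semiconj.2
    ⟨Equiv.ofBijective u.1 (u.2.2.bijective_of_nat_card_le hcard), u.2.1⟩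

def fddsHomProdEquiv (z : ζ → ζ) (f : α → α) (g : β → β) :
    FddsHom z (Prod.map f g) ≃ FddsHom z f × FddsHom z g where
  toFun h := (⟨Prod.fst ∘ h.1, fun t => congrArg Prod.fst (h.2 t)⟩,
    ⟨Prod.snd ∘ h.1, fun t => congrArg Prod.snd (h.2 t)⟩)
  invFun p := ⟨fun t => (p.1.1 t, p.2.1 t), fun t => Prod.ext (p.1.2 t) (p.2.2 t)⟩

def fddsHomPiEquiv (z : ζ → ζ) (f : α → α) (ι : Type) :
    FddsHom z (fun v : ι → α => f ∘ v) ≃ (ι → FddsHom z f) where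
  toFun h i := ⟨fun t => h.1 t i, fun t => congrFun (h.2 t) i⟩
  invFun H := ⟨fun t i => (H i).1 t, fun t => funext fun i => (H i).2 t⟩

def fddsHomSigmaEquiv {I : Type} {δ : I → Type} (F : ∀ i, δ i → δ i) (f : α → α) :
    FddsHom (Sigma.map id F) f ≃ ∀ i, FddsHom (F i) f where
  toFun h i := ⟨fun x => h.1 ⟨i, x⟩, fun x => h.2 ⟨i, x⟩⟩
  invFun H := ⟨fun x => (H x.1).1 x.2, fun x => (H x.1).2 x.2⟩

end Homomorphisms

section Lovasz

variable {ζ α β : Type} {z : ζ → ζ} {f : α → α} {g : β → β}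

def FddsCong (z : ζ → ζ) : Type := {s : Setoid ζ // ∀ ⦃a b⦄, s a b → s (z a) (z b)}

namespace FddsCong

noncomputable instance [Finite ζ] : Fintype (FddsCong z) :=
  haveI : Finite (Setoid ζ) := .of_injective _ fun _ _ => Setoid.eq_iff_rel_eq.2
  haveI : Finite (FddsCong z) := Subtype.finite
  Fintype.ofFinite _

instance : Bot (FddsCong z) := ⟨⟨⊥, fun _ _ h => congrArg z h⟩⟩

def quotMap (s : FddsCong z) : Quotient s.1 → Quotient s.1 := Quotient.map z s.2

theorem fddsIso_quotMap_bot : FddsIso (quotMap (⊥ : FddsCong z)) z :=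
  ⟨Setoid.quotientBotEquiv, funext <| Quotient.ind fun _ => rfl⟩

theorem card_quotient_lt [Finite ζ] {s : FddsCong z} (hs : s ≠ ⊥) :
    Nat.card (Quotient s.1) < Nat.card ζ := by
  have hsurj : Surjective (Quotient.mk s.1) := Quotient.mk_surjective
  have hinj : ¬ Injective (Quotient.mk s.1) := fun hinj => hs <| Subtype.ext <| Setoid.ext
    fun a b => ⟨fun hab => hinj (Quotient.sound hab), fun hab => hab ▸ s.1.refl a⟩
  exact (Nat.card_le_card_of_surjective _ hsurj).lt_of_ne
    fun h => hinj (hsurj.bijective_of_nat_card_le h.ge).1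

def homOfEmb (s : FddsCong z) (k : FddsEmb s.quotMap f) : FddsHom z f :=
  ⟨k.1 ∘ Quotient.mk s.1, k.2.1.comp_left fun _ => rfl⟩

theorem ker_homOfEmb (s : FddsCong z) (k : FddsEmb s.quotMap f) :
    Setoid.ker (homOfEmb s k).1 = s.1 :=
  Setoid.ext fun _ _ => k.2.2.eq_iff.trans Quotient.eq

end FddsCong

open FddsCong in
theorem bijective_sigma_homOfEmb :
    Bijective fun p : Σ s : FddsCong z, FddsEmb s.quotMap f => homOfEmb p.1 p.2 := by
  refine ⟨?_, fun h => ?_⟩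
  · rintro ⟨s, k⟩ ⟨s', k'⟩ hkk'
    obtain rfl : s = s' := Subtype.ext <| by
      rw [← ker_homOfEmb s k, ← ker_homOfEmb s' k', show (homOfEmb s k).1 = _ from congrArg _ hkk']
    have : k.1 = k'.1 := funext <| Quotient.ind <| congrFun (congrArg Subtype.val hkk')
    rw [Subtype.ext this]
  · refine ⟨⟨⟨Setoid.ker h.1, fun a b hab => ?_⟩, ⟨Setoid.kerLift h.1, ?_,
      Setoid.kerLift_injective _⟩⟩, rfl⟩
    · change h.1 (z a) = h.1 (z b)
      rw [h.2, h.2, show h.1 a = h.1 b from hab]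
    · exact Quotient.ind h.2

theorem card_fddsHom_eq_sum_card_fddsEmb [Finite ζ] [Finite α] (z : ζ → ζ) (f : α → α) :
    Nat.card (FddsHom z f) = ∑ s : FddsCong z, Nat.card (FddsEmb s.quotMap f) := by
  rw [← Nat.card_eq_of_bijective _ bijective_sigma_homOfEmb, Nat.card_sigma]

theorem card_fddsEmb_eq_of_card_fddsHom_eq [Finite α] [Finite β]
    (H : ∀ (ζ : Type) [Finite ζ] (z : ζ → ζ), Nat.card (FddsHom z f) = Nat.card (FddsHom z g))
    (ζ : Type) [Finite ζ] (z : ζ → ζ) : Nat.card (FddsEmb z f) = Nat.card (FddsEmb z g) := by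
  induction hn : Nat.card ζ using Nat.strong_induction_on generalizing ζ with
  | _ n ih =>
    classical
    have hsum := H ζ z
    rw [card_fddsHom_eq_sum_card_fddsEmb, card_fddsHom_eq_sum_card_fddsEmb,
      Fintype.sum_eq_add_sum_compl ⊥, Fintype.sum_eq_add_sum_compl ⊥,
      FddsCong.fddsIso_quotMap_bot.card_fddsEmb_eq (.refl f),
      FddsCong.fddsIso_quotMap_bot.card_fddsEmb_eq (.refl g)] at hsum
    have htail : ∑ s ∈ ({⊥}ᶜ : Finset (FddsCong z)), Nat.card (FddsEmb s.quotMap f) =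
        ∑ s ∈ ({⊥}ᶜ : Finset (FddsCong z)), Nat.card (FddsEmb s.quotMap g) :=
      Finset.sum_congr rfl fun s hs =>
        ih _ (hn ▸ FddsCong.card_quotient_lt (by simpa using hs)) _ _ rfl
    omega

theorem nonempty_fddsEmb_of_card_eq [Finite α]
    (h : Nat.card (FddsEmb f f) = Nat.card (FddsEmb f g)) : Nonempty (FddsEmb f g) :=
  haveI : Nonempty (FddsEmb f f) := ⟨⟨id, fun _ => rfl, injective_id⟩⟩
  (Nat.card_pos_iff.1 (h ▸ Nat.card_pos)).1

theorem fddsIso_iff_forall_card_fddsHom_eq [Finite α] [Finite β] :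
    FddsIso f g ↔
      ∀ (ζ : Type) [Finite ζ] (z : ζ → ζ), Nat.card (FddsHom z f) = Nat.card (FddsHom z g) := by
  refine ⟨fun h ζ _ z => (FddsIso.refl z).card_fddsHom_eq h, fun H => ?_⟩
  obtain ⟨u⟩ := nonempty_fddsEmb_of_card_eq (card_fddsEmb_eq_of_card_fddsHom_eq H α f)
  obtain ⟨v⟩ := nonempty_fddsEmb_of_card_eq
    (card_fddsEmb_eq_of_card_fddsHom_eq (fun ζ _ z => (H ζ z).symm) β g)
  exact fddsIso_of_fddsEmb u v

end Lovasz

section Components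

variable {ζ γ : Type} (z : ζ → ζ)

def componentSetoid : Setoid ζ where
  r a b := ∃ m n, z^[m] a = z^[n] b
  iseqv := by
    refine ⟨fun a => ⟨0, 0, rfl⟩, fun ⟨m, n, h⟩ => ⟨n, m, h.symm⟩, ?_⟩
    rintro a b c ⟨m, n, h⟩ ⟨p, q, h'⟩
    refine ⟨p + m, n + q, ?_⟩
    rw [iterate_add_apply, h, ← iterate_add_apply, add_comm p n, iterate_add_apply, h',
      ← iterate_add_apply]

def FddsConnected : Prop := Nonempty ζ ∧ ∀ a b, componentSetoid z a b

abbrev Component (c : Quotient (componentSetoid z)) : Type :=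
  {t : ζ // Quotient.mk _ t = c}

theorem mk_componentSetoid_apply (t : ζ) :
    Quotient.mk (componentSetoid z) (z t) = Quotient.mk _ t :=
  Quotient.sound ⟨0, 1, rfl⟩

def componentMap (c : Quotient (componentSetoid z)) : Component z c → Component z c :=
  Subtype.map z fun t ht => (mk_componentSetoid_apply z t).trans ht

theorem fddsConnected_componentMap (c : Quotient (componentSetoid z)) :
    FddsConnected (componentMap z c) := by
  constructor
  · obtain ⟨t, rfl⟩ := Quotient.mk_surjective c
    exact ⟨⟨t, rfl⟩⟩
  · rintro ⟨a, ha⟩ ⟨b, hb⟩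
    obtain ⟨m, n, h⟩ := Quotient.exact (ha.trans hb.symm)
    have hval (k : ℕ) : Semiconj Subtype.val (componentMap z c)^[k] z^[k] :=
      Semiconj.iterate_right (f := Subtype.val) (gb := z) (fun _ => rfl) k
    exact ⟨m, n, Subtype.ext <| (hval m ⟨a, ha⟩).trans (h.trans (hval n ⟨b, hb⟩).symm)⟩

theorem fddsIso_sigma_componentMap : FddsIso (Sigma.map id (componentMap z)) z :=
  ⟨Equiv.sigmaFiberEquiv _, rfl⟩

variable {z}

theorem FddsConnected.apply_eq_of_invariant (hz : FddsConnected z) {φ : ζ → γ}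
    (hφ : ∀ t, φ (z t) = φ t) (a b : ζ) : φ a = φ b := by
  have key (n : ℕ) (t : ζ) : φ (z^[n] t) = φ t := by
    simpa using Semiconj.iterate_right (gb := id) hφ n t
  obtain ⟨m, n, h⟩ := hz.2 a b
  rw [← key m a, h, key n b]

theorem FddsConnected.card_fddsHom_sigma [Finite ζ] {I : Type} [Fintype I] {δ : I → Type}
    [∀ i, Finite (δ i)] (hz : FddsConnected z) (F : ∀ i, δ i → δ i) :
    Nat.card (FddsHom z (Sigma.map id F)) = ∑ i, Nat.card (FddsHom z (F i)) := by
  rw [← Nat.card_sigma]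
  refine (Nat.card_eq_of_bijective (fun p : Σ i, FddsHom z (F i) => ⟨Sigma.mk p.1 ∘ p.2.1,
    (show Semiconj (Sigma.mk p.1) (F p.1) (Sigma.map id F) from fun _ => rfl).comp_left p.2.2⟩)
    ⟨?_, fun h => ?_⟩).symm
  · obtain ⟨a₀⟩ := hz.1
    rintro ⟨i, k⟩ ⟨j, l⟩ hkl
    have hkl' : (fun t => (⟨i, k.1 t⟩ : Σ i, δ i)) = fun t => ⟨j, l.1 t⟩ :=
      congrArg Subtype.val hkl
    obtain rfl : i = j := congrArg Sigma.fst (congrFun hkl' a₀)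
    obtain rfl : k = l := Subtype.ext (funext fun t => sigma_mk_injective (congrFun hkl' t))
    rfl
  · obtain ⟨a₀⟩ := hz.1
    have hfst (t : ζ) : (h.1 t).1 = (h.1 a₀).1 :=
      hz.apply_eq_of_invariant (φ := fun t => (h.1 t).1) (fun t => by rw [h.2 t]; rfl) _ _
    have hmk (x : Σ i, δ i) (hx : x.1 = (h.1 a₀).1) : ∃ y, x = ⟨(h.1 a₀).1, y⟩ := by
      obtain ⟨i, y⟩ := x
      subst hx
      exact ⟨y, rfl⟩
    choose k hk using fun t => hmk (h.1 t) (hfst t)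
    refine ⟨⟨_, k, fun t => sigma_mk_injective ?_⟩, Subtype.ext (funext fun t => (hk t).symm)⟩
    rw [← hk, h.2 t, hk]
    rfl

end Components

theorem fddsIso_iff_forall_connected_card_fddsHom_eq {α β : Type} [Finite α] [Finite β]
    {f : α → α} {g : β → β} :
    FddsIso f g ↔ ∀ (ζ : Type) [Finite ζ] (z : ζ → ζ), FddsConnected z →
      Nat.card (FddsHom z f) = Nat.card (FddsHom z g) := by
  rw [fddsIso_iff_forall_card_fddsHom_eq]
  refine ⟨fun H ζ _ z _ => H ζ z, fun H ζ _ z => ?_⟩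
  have := Fintype.ofFinite (Quotient (componentSetoid z))
  have hz := (fddsIso_sigma_componentMap z).symm
  rw [hz.card_fddsHom_eq (.refl f), hz.card_fddsHom_eq (.refl g),
    Nat.card_congr (fddsHomSigmaEquiv _ f), Nat.card_congr (fddsHomSigmaEquiv _ g),
    Nat.card_pi, Nat.card_pi]
  exact Finset.prod_congr rfl fun c _ => H _ _ (fddsConnected_componentMap z c)

theorem strictMono_sum_mul_pow {ι : Type} [Fintype ι] {a e : ι → ℕ} (he : ∀ i, e i ≠ 0)
    (ha : ∃ j, a j ≠ 0) : StrictMono fun x => ∑ i, a i * x ^ e i := by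
  obtain ⟨j, hj⟩ := ha
  intro u v huv
  refine Finset.sum_lt_sum (fun i _ => by gcongr) ⟨j, Finset.mem_univ j, ?_⟩
  exact Nat.mul_lt_mul_of_pos_left (Nat.pow_lt_pow_left huv (he j)) (Nat.pos_of_ne_zero hj)

theorem sum_mul_pow_eq_iff {ι : Type} [Fintype ι] (a : ι → ℕ) {e : ι → ℕ} (he : ∀ i, e i ≠ 0)
    (x y : ℕ) :
    ∑ i, a i * x ^ e i = ∑ i, a i * y ^ e i ↔ (∑ i, a i) * x = (∑ i, a i) * y := by
  by_cases ha : ∃ j, a j ≠ 0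
  · have hsum : ∑ i, a i ≠ 0 := by simpa [Finset.sum_eq_zero_iff] using ha
    rw [(strictMono_sum_mul_pow he ha).injective.eq_iff, mul_right_inj' hsum]
  · simp only [not_exists, not_not] at ha
    simp [ha]

section Polynomial

variable {m : ℕ} {γ : Fin m → Type} [∀ i, Finite (γ i)] (g : ∀ i, γ i → γ i)
  {α ζ : Type} [Finite ζ] (f : α → α) {z : ζ → ζ}

theorem FddsConnected.card_fddsHom_polyEvalNC [Finite α] (hz : FddsConnected z) :
    Nat.card (FddsHom z (polyEvalNC g f)) =
      ∑ i, Nat.card (FddsHom z (g i)) * Nat.card (FddsHom z f) ^ (i.val + 1) := by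
  have hsigma : polyEvalNC g f =
      Sigma.map (id : Fin m → Fin m) fun i => Prod.map (g i) (f ∘ · : (Fin (i + 1) → α) → _) :=
    rfl
  rw [hsigma, hz.card_fddsHom_sigma]
  simp only [Nat.card_congr (fddsHomProdEquiv _ _ _), Nat.card_prod,
    Nat.card_congr (fddsHomPiEquiv _ _ _), Nat.card_fun, Nat.card_fin]

theorem FddsConnected.card_fddsHom_monomial (hz : FddsConnected z) :
    Nat.card (FddsHom z (Prod.map (sumCoeffMap g) f)) =
      (∑ i, Nat.card (FddsHom z (g i))) * Nat.card (FddsHom z f) := by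
  rw [Nat.card_congr (fddsHomProdEquiv _ _ _), Nat.card_prod,
    show sumCoeffMap g = Sigma.map id g from rfl, hz.card_fddsHom_sigma]

theorem fddsIso_polyEvalNC_iff [Finite α] {β : Type} [Finite β] (f' : β → β) :
    FddsIso (polyEvalNC g f) (polyEvalNC g f') ↔
      FddsIso (Prod.map (sumCoeffMap g) f) (Prod.map (sumCoeffMap g) f') := by
  simp only [fddsIso_iff_forall_connected_card_fddsHom_eq]
  refine forall_congr' fun ζ => forall_congr' fun _ => forall_congr' fun z =>
    forall_congr' fun hz => ?_
  rw [hz.card_fddsHom_polyEvalNC, hz.card_fddsHom_polyEvalNC, hz.card_fddsHom_monomial,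
    hz.card_fddsHom_monomial]
  exact sum_mul_pow_eq_iff _ (fun i => i.val.succ_ne_zero) _ _

end Polynomial

/-- A constant-free polynomial `P = Σ_{i=1}^m A_i X^i` is injective up
to isomorphism iff the monomial `(A_1 ⊕ ⋯ ⊕ A_m) X` is injective up to isomorphism. -/
theorem polyNC_injective_iff_monomial_injective {m : ℕ} {γ : Fin m → Type}
    [∀ i, Fintype (γ i)] (g : ∀ i, γ i → γ i) :
    (∀ (α β : Type) [Fintype α] [Fintype β] (f : α → α) (f' : β → β),
      FddsIso (polyEvalNC g f) (polyEvalNC g f') → FddsIso f f')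
    ↔ (∀ (α β : Type) [Fintype α] [Fintype β] (f : α → α) (f' : β → β),
      FddsIso (Prod.map (sumCoeffMap g) f) (Prod.map (sumCoeffMap g) f') →
        FddsIso f f') := by
  refine forall_congr' fun α => forall_congr' fun β => forall_congr' fun _ => forall_congr' fun _ =>
    forall_congr' fun f => forall_congr' fun f' => ?_
  rw [fddsIso_polyEvalNC_iff]
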